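/- arXiv:2506.06079 — 2 statements merged into one kernel-verified Lean document; each statement's English description precedes it below -/
import Mathlib

section
/- Let P ∈ ℝ^{n×n} be symmetric positive definite, M ∈ ℝ^{n×n}, N ∈ ℝ^{n×p}, R ∈ ℝ^{n×r}, and let Q : ℝⁿ → ℝ^p be continuously differentiable with DQ(x)ᵀ·DQ(x) ⪯ R·Rᵀ for every x ∈ ℝⁿ, where DQ(x) is the Jacobian matrix of Q at x. Suppose the block matrix [[−P·M − Mᵀ·P − R·Rᵀ, P·N], [Nᵀ·P, I_p]] is positive semidefinite. Then for all a, b ∈ ℝⁿ, (a − b)ᵀ·P·( M·(a − b) + N·(Q(a) − Q(b)) ) ≤ 0. -/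
open Matrix

/-- The Jacobian matrix of a map `f : ℝⁿ → ℝᵖ` at a point `x`. -/
noncomputable def jacobianMatrix {n p : ℕ} (f : (Fin n → ℝ) → (Fin p → ℝ))
    (x : Fin n → ℝ) : Matrix (Fin p) (Fin n) ℝ :=
  Matrix.of fun i j => fderiv ℝ f x (Pi.single j 1) i

lemma jac_mulVec {n p : ℕ} (Q : (Fin n → ℝ) → (Fin p → ℝ)) (z v : Fin n → ℝ) :
    (jacobianMatrix Q z).mulVec v = fderiv ℝ Q z v := by
  have hv : v = ∑ j : Fin n, v j • (Pi.single j 1 : Fin n → ℝ) := by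
    funext k
    simp [Pi.single_apply, Finset.sum_apply]
  funext i
  conv_rhs => rw [hv]
  rw [map_sum]
  simp only [_root_.map_smul, Finset.sum_apply, Pi.smul_apply, smul_eq_mul]
  simp only [Matrix.mulVec, dotProduct, jacobianMatrix, Matrix.of_apply]
  exact Finset.sum_congr rfl fun j _ => mul_comm _ _

lemma enorm_eq {p : ℕ} (w : Fin p → ℝ) :
    ‖(PiLp.continuousLinearEquiv 2 ℝ (fun _ : Fin p => ℝ)).symm w‖ = Real.sqrt (w ⬝ᵥ w) := by
  rw [EuclideanSpace.norm_eq]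
  congr 1
  refine Finset.sum_congr rfl fun i _ => ?_
  simp [dotProduct, Real.norm_eq_abs, sq_abs, sq]

lemma dp_self_nonneg {p : ℕ} (w : Fin p → ℝ) : 0 ≤ w ⬝ᵥ w :=
  Finset.sum_nonneg fun i _ => mul_self_nonneg _

lemma dp_self {n p : ℕ} (A : Matrix (Fin p) (Fin n) ℝ) (x : Fin n → ℝ) :
    A.mulVec x ⬝ᵥ A.mulVec x = x ⬝ᵥ (Aᵀ * A).mulVec x := by
  rw [← Matrix.mulVec_mulVec]
  conv_rhs => rw [Matrix.dotProduct_mulVec, Matrix.vecMul_transpose]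

lemma dp_sym {n m : ℕ} (A : Matrix (Fin n) (Fin m) ℝ) (u : Fin n → ℝ) (w : Fin m → ℝ) :
    u ⬝ᵥ A.mulVec w = Aᵀ.mulVec u ⬝ᵥ w := by
  rw [Matrix.dotProduct_mulVec, Matrix.mulVec_transpose]

/-- incremental monotonicity of the closed-loop drift
`x ↦ Mx + N·Q(x)` under the LMI condition and the Jacobian bound
`DQ(x)ᵀ·DQ(x) ⪯ R·Rᵀ`. -/
theorem stmt_6 (n p r : ℕ)
    (P : Matrix (Fin n) (Fin n) ℝ) (hP : P.PosDef)
    (M : Matrix (Fin n) (Fin n) ℝ) (N : Matrix (Fin n) (Fin p) ℝ)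
    (R : Matrix (Fin n) (Fin r) ℝ)
    (Q : (Fin n → ℝ) → (Fin p → ℝ)) (hQ : ContDiff ℝ 1 Q)
    (hJac : ∀ x : Fin n → ℝ,
      (R * Rᵀ - (jacobianMatrix Q x)ᵀ * jacobianMatrix Q x).PosSemidef)
    (hblk : (Matrix.fromBlocks (-(P * M) - Mᵀ * P - R * Rᵀ) (P * N)
        (Nᵀ * P) (1 : Matrix (Fin p) (Fin p) ℝ)).PosSemidef) :
    ∀ a b : Fin n → ℝ,
      (a - b) ⬝ᵥ P.mulVec (M.mulVec (a - b) + N.mulVec (Q a - Q b)) ≤ 0 := by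
  intro a b
  set x : Fin n → ℝ := a - b with hx
  set y : Fin p → ℝ := Q a - Q b with hy
  have hPt : Pᵀ = P := by
    have := hP.isHermitian
    rwa [Matrix.IsHermitian, Matrix.conjTranspose_eq_transpose_of_trivial] at this
  -- Euclidean norm setup
  set L : (Fin p → ℝ) →L[ℝ] EuclideanSpace ℝ (Fin p) :=
    ((PiLp.continuousLinearEquiv 2 ℝ (fun _ : Fin p => ℝ)).symm :
      (Fin p → ℝ) ≃L[ℝ] EuclideanSpace ℝ (Fin p)).toContinuousLinearMap with hL
  have hLnorm : ∀ w : Fin p → ℝ, ‖L w‖ = Real.sqrt (w ⬝ᵥ w) := fun w => enorm_eq w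
  -- the constant C
  set C : ℝ := Real.sqrt (x ⬝ᵥ (R * Rᵀ).mulVec x) with hC
  have hRR : x ⬝ᵥ (R * Rᵀ).mulVec x = Rᵀ.mulVec x ⬝ᵥ Rᵀ.mulVec x := by
    rw [dp_self Rᵀ x, Matrix.transpose_transpose]
  have hRRnonneg : 0 ≤ x ⬝ᵥ (R * Rᵀ).mulVec x := by
    rw [hRR]; exact dp_self_nonneg _
  -- mean value inequality: y ⬝ᵥ y ≤ x ⬝ᵥ (R * Rᵀ) x
  have hkey : y ⬝ᵥ y ≤ x ⬝ᵥ (R * Rᵀ).mulVec x := by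
    set g : ℝ → EuclideanSpace ℝ (Fin p) := fun t => L (Q (b + t • x)) with hg
    have hderiv : ∀ t : ℝ, HasDerivAt g (L (fderiv ℝ Q (b + t • x) x)) t := by
      intro t
      have hline : HasDerivAt (fun t : ℝ => b + t • x) x t := by
        simpa using ((hasDerivAt_id t).smul_const x).const_add b
      have hQd : HasFDerivAt Q (fderiv ℝ Q (b + t • x)) (b + t • x) :=
        (hQ.differentiable one_ne_zero (b + t • x)).hasFDerivAt
      exact (L.hasFDerivAt.comp_hasDerivAt t (hQd.comp_hasDerivAt t hline))
    have hbound : ∀ t : ℝ, ‖L (fderiv ℝ Q (b + t • x) x)‖ ≤ C := by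
      intro t
      set z := b + t • x
      rw [hLnorm, ← jac_mulVec Q z x, hC]
      apply Real.sqrt_le_sqrt
      rw [dp_self]
      have h0 := (hJac z).dotProduct_mulVec_nonneg x
      rw [star_trivial, Matrix.sub_mulVec, dotProduct_sub, sub_nonneg] at h0
      exact h0
    have hmvt : ‖g 1 - g 0‖ ≤ C :=
      norm_image_sub_le_of_norm_deriv_le_segment_01'
        (fun t _ => (hderiv t).hasDerivWithinAt) (fun t _ => hbound t)
    have hg1 : g 1 = L (Q a) := by simp [hg, hx]
    have hg0 : g 0 = L (Q b) := by simp [hg]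
    have hdiff : g 1 - g 0 = L y := by rw [hg1, hg0, ← map_sub, hy]
    rw [hdiff, hLnorm] at hmvt
    calc y ⬝ᵥ y = Real.sqrt (y ⬝ᵥ y) ^ 2 := by
          rw [Real.sq_sqrt (dp_self_nonneg _)]
      _ ≤ C ^ 2 := by
          apply pow_le_pow_left₀ (Real.sqrt_nonneg _) hmvt
      _ = x ⬝ᵥ (R * Rᵀ).mulVec x := by rw [hC, Real.sq_sqrt hRRnonneg]
  -- block inequality
  have hb := hblk.dotProduct_mulVec_nonneg (Sum.elim x (-y))
  rw [star_trivial, Matrix.fromBlocks_mulVec, sumElim_dotProduct_sumElim] at hb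
  simp only [Matrix.sub_mulVec, Matrix.neg_mulVec, Matrix.mulVec_neg, Matrix.one_mulVec,
    dotProduct_add, dotProduct_sub, dotProduct_neg,
    neg_dotProduct, neg_neg, Sum.elim_comp_inl, Sum.elim_comp_inr] at hb
  have h1 : x ⬝ᵥ (Mᵀ * P).mulVec x = x ⬝ᵥ (P * M).mulVec x := by
    rw [dp_sym, Matrix.transpose_mul, Matrix.transpose_transpose, hPt,
      dotProduct_comm]
  have h2 : y ⬝ᵥ (Nᵀ * P).mulVec x = x ⬝ᵥ (P * N).mulVec y := by
    rw [dp_sym, Matrix.transpose_mul, Matrix.transpose_transpose, hPt,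
      dotProduct_comm]
  have hgoal : x ⬝ᵥ P.mulVec (M.mulVec x + N.mulVec y)
      = x ⬝ᵥ (P * M).mulVec x + x ⬝ᵥ (P * N).mulVec y := by
    rw [Matrix.mulVec_add, dotProduct_add, Matrix.mulVec_mulVec, Matrix.mulVec_mulVec]
  rw [hgoal]
  linarith [hb, hkey, h1, h2]
end

section
/- Output regulation theorem (trajectory form). In addition to the hypotheses of the dissipation-inequality statement — namely: A, B, C, E, F, K, 𝓘, Z(x) = (x, Q(x)) with Q continuously differentiable, symmetric positive definite 𝒫 with 𝓘ᵀ𝒫(A+BK) + (A+BK)ᵀ𝒫𝓘 ⪯ 0 and 𝓘ᵀ𝒫B = Cᵀ, skew-symmetric S, Ξ, α > 0, and now K̂ ∈ ℝ^{m×m} symmetric positive definite; differentiable x, η solving the closed loop x' = A·Z(x) + B·(K·Z(x) + Ξᵀη − K̂e) + E·w, η' = Sη − αΞe with e = C·Z(x) + F·w, and differentiable x_ss, η_ss solving x_ss' = A·Z(x_ss) + B·(K·Z(x_ss) + Ξᵀη_ss) + E·w, η_ss' = S·η_ss with C·Z(x_ss) + F·w ≡ 0 — assume further that w : [0,∞)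 → ℝ^q is differentiable with w' = S_w·w for some matrix S_w and w is bounded, and that x_ss and η_ss are bounded on [0,∞). Then x and η are bounded on [0,∞) and the regulation error satisfies lim_{t→∞} e(t) = 0. -/
open Matrix Filter

/-- The library vector `Z(x) = (x, Q(x)) ∈ ℝ^{n_Z}`, with `ℝ^{n_Z}` split as
`ℝ^n × ℝ^{n_Z − n}`. -/
def Zvec {n p : ℕ} (Q : (Fin n → ℝ) → (Fin p → ℝ)) (x : Fin n → ℝ) :
    (Fin n ⊕ Fin p) → ℝ :=
  Sum.elim x (Q x)

/-- The matrix `𝓘 = [I_n  0_{n×p}]`. -/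
def calI (n p : ℕ) : Matrix (Fin n) (Fin n ⊕ Fin p) ℝ :=
  Matrix.fromCols 1 0

/- ===================== auxiliary lemmas ===================== -/

lemma hasDerivAt_dot {k : ℕ} {u v : ℝ → Fin k → ℝ} {u' v' : Fin k → ℝ} {t : ℝ}
    (hu : HasDerivAt u u' t) (hv : HasDerivAt v v' t) :
    HasDerivAt (fun s => u s ⬝ᵥ v s) (u' ⬝ᵥ v t + u t ⬝ᵥ v') t := by
  have h : ∀ i : Fin k, HasDerivAt (fun s => u s i * v s i)
      (u' i * v t i + u t i * v' i) t := fun i =>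
    ((hasDerivAt_pi.1 hu) i).mul ((hasDerivAt_pi.1 hv) i)
  have := HasDerivAt.fun_sum (u := Finset.univ) (fun i _ => h i)
  simpa [dotProduct, Finset.sum_add_distrib] using this

lemma hasDerivAt_mulVec {a b : Type*} [Fintype a] [Fintype b] (M : Matrix a b ℝ)
    {u : ℝ → b → ℝ} {u' : b → ℝ} {t : ℝ} (hu : HasDerivAt u u' t) :
    HasDerivAt (fun s => M.mulVec (u s)) (M.mulVec u') t := by
  rw [hasDerivAt_pi]
  intro i
  have h : ∀ j : b, HasDerivAt (fun s => M i j * u s j) (M i j * u' j) t := fun j =>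
    ((hasDerivAt_pi.1 hu) j).const_mul _
  have := HasDerivAt.fun_sum (u := Finset.univ) (fun j _ => h j)
  simpa [Matrix.mulVec, dotProduct] using this

lemma dot_shift {a b : Type*} [Fintype a] [Fintype b] (M : Matrix a b ℝ) (u : b → ℝ)
    (v : a → ℝ) : (M.mulVec u) ⬝ᵥ v = u ⬝ᵥ (Mᵀ.mulVec v) := by
  rw [dotProduct_comm, Matrix.dotProduct_mulVec, ← Matrix.mulVec_transpose, dotProduct_comm,
    Matrix.dotProduct_mulVec, ← Matrix.mulVec_transpose, Matrix.transpose_transpose]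

lemma dot_self_nonneg' {k : ℕ} (v : Fin k → ℝ) : (0:ℝ) ≤ v ⬝ᵥ v :=
  Finset.sum_nonneg fun _ _ => mul_self_nonneg _

lemma dot_self_pos {k : ℕ} {v : Fin k → ℝ} (hv : v ≠ 0) : (0:ℝ) < v ⬝ᵥ v := by
  obtain ⟨i, hi⟩ := Function.ne_iff.1 hv
  have hi' : v i ≠ 0 := by simpa using hi
  exact Finset.sum_pos' (fun j _ => mul_self_nonneg _)
    ⟨i, Finset.mem_univ i, mul_self_pos.2 hi'⟩

lemma norm_sq_le_dot {k : ℕ} (v : Fin k → ℝ) : ‖v‖ ^ 2 ≤ v ⬝ᵥ v := by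
  have h1 : ‖v‖ ≤ Real.sqrt (v ⬝ᵥ v) := by
    refine (pi_norm_le_iff_of_nonneg (Real.sqrt_nonneg _)).2 fun i => ?_
    rw [Real.norm_eq_abs, ← Real.sqrt_sq_eq_abs]
    refine Real.sqrt_le_sqrt ?_
    have h2 := Finset.single_le_sum (f := fun j => v j * v j)
      (fun j _ => mul_self_nonneg (v j)) (Finset.mem_univ i)
    simp only [dotProduct, sq]
    exact h2
  calc ‖v‖ ^ 2 ≤ Real.sqrt (v ⬝ᵥ v) ^ 2 := by
        exact pow_le_pow_left₀ (norm_nonneg _) h1 2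
    _ = v ⬝ᵥ v := Real.sq_sqrt (dot_self_nonneg' v)

lemma continuous_quadform {k : ℕ} (M : Matrix (Fin k) (Fin k) ℝ) :
    Continuous (fun v : Fin k → ℝ => v ⬝ᵥ M.mulVec v) := by
  unfold dotProduct Matrix.mulVec
  refine continuous_finset_sum _ fun i _ => ?_
  exact (continuous_apply i).mul (continuous_finset_sum _ fun j _ =>
    continuous_const.mul (continuous_apply j))

lemma continuous_dotself {k : ℕ} :
    Continuous (fun v : Fin k → ℝ => v ⬝ᵥ v) := by
  unfold dotProduct
  exact continuous_finset_sum _ fun i _ => (continuous_apply i).mul (continuous_apply i)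

lemma posdef_coercive {k : ℕ} {M : Matrix (Fin k) (Fin k) ℝ} (hM : M.PosDef) :
    ∃ c : ℝ, 0 < c ∧ ∀ v : Fin k → ℝ, c * (v ⬝ᵥ v) ≤ v ⬝ᵥ M.mulVec v := by
  rcases Nat.eq_zero_or_pos k with hk | hk
  · subst hk
    exact ⟨1, one_pos, fun v => by simp [dotProduct]⟩
  · set Sp : Set (Fin k → ℝ) := {v | v ⬝ᵥ v = 1} with hSp
    have hclosed : IsClosed Sp := isClosed_eq continuous_dotself continuous_const
    have hbdd : Bornology.IsBounded Sp := by
      refine (Metric.isBounded_iff_subset_closedBall 0).2 ⟨1, fun v hv => ?_⟩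
      have h2 : ‖v‖^2 ≤ 1 := by
        calc ‖v‖^2 ≤ v ⬝ᵥ v := norm_sq_le_dot v
          _ = 1 := hv
      have : ‖v‖ ≤ 1 := by nlinarith [norm_nonneg v]
      simpa [Metric.mem_closedBall] using this
    have hcpt : IsCompact Sp := Metric.isCompact_of_isClosed_isBounded hclosed hbdd
    have hne : Sp.Nonempty := by
      refine ⟨Pi.single ⟨0, hk⟩ 1, ?_⟩
      simp [hSp, dotProduct, Pi.single_apply]
    obtain ⟨v₀, hv₀Sp, hmin⟩ := hcpt.exists_isMinOn hne (continuous_quadform M).continuousOn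
    have hv₀ne : v₀ ≠ 0 := by
      intro h
      rw [h] at hv₀Sp
      simp [hSp, dotProduct] at hv₀Sp
    have hc : 0 < v₀ ⬝ᵥ M.mulVec v₀ := by
      have := hM.dotProduct_mulVec_pos hv₀ne
      simpa using this
    refine ⟨v₀ ⬝ᵥ M.mulVec v₀, hc, fun v => ?_⟩
    rcases eq_or_ne v 0 with rfl | hv
    · simp
    · set r : ℝ := Real.sqrt (v ⬝ᵥ v) with hr
      have hvv : 0 < v ⬝ᵥ v := dot_self_pos hv
      have hrpos : 0 < r := Real.sqrt_pos.2 hvv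
      have hr2 : r ^ 2 = v ⬝ᵥ v := Real.sq_sqrt hvv.le
      have hu : (r⁻¹ • v) ∈ Sp := by
        simp only [hSp, Set.mem_setOf_eq, smul_dotProduct, dotProduct_smul,
          smul_eq_mul]
        field_simp
        linarith [hr2]
      have h0 : v₀ ⬝ᵥ M.mulVec v₀ ≤ (r⁻¹ • v) ⬝ᵥ M.mulVec (r⁻¹ • v) := hmin hu
      simp only [smul_dotProduct, dotProduct_smul, Matrix.mulVec_smul,
        smul_eq_mul] at h0
      have h3 : v₀ ⬝ᵥ M.mulVec v₀ * (v ⬝ᵥ v) ≤ v ⬝ᵥ M.mulVec v := by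
        have hr2' : r * r = v ⬝ᵥ v := by nlinarith [hr2]
        calc v₀ ⬝ᵥ M.mulVec v₀ * (v ⬝ᵥ v) ≤ (r⁻¹ * (r⁻¹ * (v ⬝ᵥ M.mulVec v))) * (v ⬝ᵥ v) := by
              nlinarith [h0, hvv]
          _ = v ⬝ᵥ M.mulVec v := by field_simp [hr2']; rw [hr2]; ring
      linarith [h3]

lemma DV_le (n p m q : ℕ)
    (A : Matrix (Fin n) (Fin n ⊕ Fin p) ℝ) (B : Matrix (Fin n) (Fin m) ℝ)
    (C : Matrix (Fin m) (Fin n ⊕ Fin p) ℝ) (K : Matrix (Fin m) (Fin n ⊕ Fin p) ℝ)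
    (P : Matrix (Fin n) (Fin n) ℝ) (hPsym : Pᵀ = P)
    (hLMI : (-((calI n p)ᵀ * (P * (A + B * K)) +
        ((A + B * K)ᵀ * P) * calI n p)).PosSemidef)
    (hPB : (calI n p)ᵀ * (P * B) = Cᵀ)
    (S : Matrix (Fin q) (Fin q) ℝ) (hS : S + Sᵀ = 0)
    (Ξ : Matrix (Fin q) (Fin m) ℝ) (α : ℝ) (hα : 0 < α)
    (Khat : Matrix (Fin m) (Fin m) ℝ)
    (Δ : (Fin n ⊕ Fin p) → ℝ) (eη : Fin q → ℝ) (e : Fin m → ℝ)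
    (he : C.mulVec Δ = e) :
    (1/2) * ((((A + B * K).mulVec Δ + B.mulVec (Ξᵀ.mulVec eη) -
          B.mulVec (Khat.mulVec e)) ⬝ᵥ P.mulVec ((calI n p).mulVec Δ)) +
        ((calI n p).mulVec Δ ⬝ᵥ P.mulVec ((A + B * K).mulVec Δ + B.mulVec (Ξᵀ.mulVec eη) -
          B.mulVec (Khat.mulVec e)))) +
      (1/(2*α)) * (((S.mulVec eη - α • Ξ.mulVec e) ⬝ᵥ eη) +
        (eη ⬝ᵥ (S.mulVec eη - α • Ξ.mulVec e))) ≤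
    -(e ⬝ᵥ Khat.mulVec e) := by
  set ex := (calI n p).mulVec Δ with hex
  set dx := (A + B * K).mulVec Δ + B.mulVec (Ξᵀ.mulVec eη) - B.mulVec (Khat.mulVec e) with hdx
  set dη := S.mulVec eη - α • Ξ.mulVec e with hdη
  have hsym : dx ⬝ᵥ P.mulVec ex = ex ⬝ᵥ P.mulVec dx := by
    rw [dotProduct_comm, dot_shift, hPsym, dotProduct_comm, dot_shift, hPsym, dotProduct_comm]
  have hshift : ∀ v : Fin n → ℝ, ex ⬝ᵥ v = Δ ⬝ᵥ (calI n p)ᵀ.mulVec v := by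
    intro v; exact dot_shift _ _ _
  have hterm1 : ex ⬝ᵥ P.mulVec ((A + B * K).mulVec Δ) ≤ 0 := by
    have h1 : ex ⬝ᵥ P.mulVec ((A + B * K).mulVec Δ) =
        Δ ⬝ᵥ ((calI n p)ᵀ * (P * (A + B * K))).mulVec Δ := by
      rw [hshift]
      rw [Matrix.mulVec_mulVec, Matrix.mulVec_mulVec, Matrix.mul_assoc]
    have h2 : (((A + B * K)ᵀ * P) * calI n p) = ((calI n p)ᵀ * (P * (A + B * K)))ᵀ := by
      rw [Matrix.transpose_mul, Matrix.transpose_mul, Matrix.transpose_transpose, hPsym,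
        Matrix.mul_assoc]
    have h3 : Δ ⬝ᵥ (((calI n p)ᵀ * (P * (A + B * K)))ᵀ).mulVec Δ =
        Δ ⬝ᵥ ((calI n p)ᵀ * (P * (A + B * K))).mulVec Δ := by
      rw [← dot_shift, dotProduct_comm]
    have h4 := hLMI.dotProduct_mulVec_nonneg Δ
    simp only [star_trivial, Matrix.neg_mulVec, dotProduct_neg, Matrix.add_mulVec,
      dotProduct_add, h2] at h4
    rw [h3] at h4
    rw [h1]
    linarith
  have hterm2 : ∀ v : Fin m → ℝ, ex ⬝ᵥ P.mulVec (B.mulVec v) = e ⬝ᵥ v := by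
    intro v
    rw [hshift, Matrix.mulVec_mulVec, Matrix.mulVec_mulVec]
    rw [show (calI n p)ᵀ * P * B = Cᵀ by rw [Matrix.mul_assoc]; exact hPB]
    rw [← he, dot_shift]
  have hskew : eη ⬝ᵥ S.mulVec eη = 0 := by
    have hST : Sᵀ = -S := eq_neg_of_add_eq_zero_right hS
    have h1 : eη ⬝ᵥ S.mulVec eη = - (eη ⬝ᵥ S.mulVec eη) := by
      conv_lhs => rw [dotProduct_comm, dot_shift, hST, Matrix.neg_mulVec, dotProduct_neg]
    linarith
  have hPdx : ex ⬝ᵥ P.mulVec dx ≤ e ⬝ᵥ Ξᵀ.mulVec eη - e ⬝ᵥ Khat.mulVec e := by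
    rw [hdx, Matrix.mulVec_sub, Matrix.mulVec_add, dotProduct_sub, dotProduct_add,
      hterm2, hterm2]
    linarith [hterm1]
  have hdηeη : eη ⬝ᵥ dη = - (α * (eη ⬝ᵥ Ξ.mulVec e)) := by
    rw [hdη, dotProduct_sub, hskew, dotProduct_smul, smul_eq_mul]
    ring
  have hcross : e ⬝ᵥ Ξᵀ.mulVec eη = eη ⬝ᵥ Ξ.mulVec e := by
    rw [dotProduct_comm, dot_shift, Matrix.transpose_transpose]
  have hdηcomm : dη ⬝ᵥ eη = eη ⬝ᵥ dη := dotProduct_comm _ _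
  rw [hsym, hdηcomm]
  rw [hdηeη]
  have : ex ⬝ᵥ P.mulVec dx + (1/(2*α)) * (2 * (-(α * (eη ⬝ᵥ Ξ.mulVec e)))) ≤
      -(e ⬝ᵥ Khat.mulVec e) := by
    have h5 : (1/(2*α)) * (2 * (-(α * (eη ⬝ᵥ Ξ.mulVec e)))) = -(eη ⬝ᵥ Ξ.mulVec e) := by
      field_simp
    rw [h5]
    rw [← hcross] at *
    linarith [hPdx]
  linarith [this]

lemma calI_Zvec {n p : ℕ} (Q : (Fin n → ℝ) → (Fin p → ℝ)) (y : Fin n → ℝ) :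
    (calI n p).mulVec (Zvec Q y) = y := by
  simp [calI, Zvec, Matrix.fromCols_mulVec_sumElim]

lemma norm_sum_elim_le {a b : ℕ} (u : Fin a → ℝ) (v : Fin b → ℝ) :
    ‖(Sum.elim u v : (Fin a ⊕ Fin b) → ℝ)‖ ≤ max ‖u‖ ‖v‖ := by
  refine (pi_norm_le_iff_of_nonneg (le_max_of_le_left (norm_nonneg _))).2 fun i => ?_
  cases i with
  | inl j => exact le_trans (norm_le_pi_norm u j) (le_max_left _ _)
  | inr j => exact le_trans (norm_le_pi_norm v j) (le_max_right _ _)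

/-- `mulVec` as a continuous linear map. -/
noncomputable def mvL {a b : Type*} [Fintype a] [Fintype b] (M : Matrix a b ℝ) :
    (b → ℝ) →L[ℝ] (a → ℝ) :=
  LinearMap.toContinuousLinearMap M.mulVecLin

@[simp] lemma mvL_apply {a b : Type*} [Fintype a] [Fintype b] (M : Matrix a b ℝ) (v : b → ℝ) :
    mvL M v = M.mulVec v := rfl

lemma norm_mulVec_le {a b : Type*} [Fintype a] [Fintype b] (M : Matrix a b ℝ) (v : b → ℝ) :
    ‖M.mulVec v‖ ≤ ‖mvL M‖ * ‖v‖ := (mvL M).le_opNorm v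

lemma continuous_Zvec {n p : ℕ} {Q : (Fin n → ℝ) → (Fin p → ℝ)} (hQ : Continuous Q) :
    Continuous (fun y : Fin n → ℝ => Zvec Q y) := by
  refine continuous_pi fun i => ?_
  cases i with
  | inl j => exact continuous_apply j
  | inr j => exact (continuous_apply j).comp hQ

lemma hasDerivAt_Zvec {n p : ℕ} {Q : (Fin n → ℝ) → (Fin p → ℝ)} (hQ : ContDiff ℝ 1 Q)
    {x : ℝ → Fin n → ℝ} {x' : Fin n → ℝ} {t : ℝ} (hx : HasDerivAt x x' t) :
    HasDerivAt (fun s => Zvec Q (x s)) (Sum.elim x' (fderiv ℝ Q (x t) x')) t := by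
  have hQd : HasDerivAt (fun s => Q (x s)) (fderiv ℝ Q (x t) x') t :=
    ((hQ.differentiable one_ne_zero (x t)).hasFDerivAt).comp_hasDerivAt t hx
  rw [hasDerivAt_pi]
  intro i
  cases i with
  | inl j => exact (hasDerivAt_pi.1 hx) j
  | inr j => exact (hasDerivAt_pi.1 hQd) j

/- ===================== main theorem ===================== -/

set_option maxHeartbeats 2000000 in
/-- output regulation theorem (trajectory form): the closed-loop
solutions are bounded on `[0,∞)` and the regulation error converges to zero. -/
theorem stmt_12 (n nZ m q : ℕ) (hnZ : n ≤ nZ)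
    (A : Matrix (Fin n) (Fin n ⊕ Fin (nZ - n)) ℝ)
    (B : Matrix (Fin n) (Fin m) ℝ)
    (C : Matrix (Fin m) (Fin n ⊕ Fin (nZ - n)) ℝ)
    (E : Matrix (Fin n) (Fin q) ℝ) (F : Matrix (Fin m) (Fin q) ℝ)
    (K : Matrix (Fin m) (Fin n ⊕ Fin (nZ - n)) ℝ)
    (Q : (Fin n → ℝ) → (Fin (nZ - n) → ℝ)) (hQ : ContDiff ℝ 1 Q)
    (P : Matrix (Fin n) (Fin n) ℝ) (hP : P.PosDef)
    (hLMI : (-((calI n (nZ - n))ᵀ * (P * (A + B * K)) +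
        ((A + B * K)ᵀ * P) * calI n (nZ - n))).PosSemidef)
    (hPB : (calI n (nZ - n))ᵀ * (P * B) = Cᵀ)
    (S : Matrix (Fin q) (Fin q) ℝ) (hS : S + Sᵀ = 0)
    (Ξ : Matrix (Fin q) (Fin m) ℝ) (α : ℝ) (hα : 0 < α)
    (Khat : Matrix (Fin m) (Fin m) ℝ) (hKhat : Khat.PosDef)
    (Sw : Matrix (Fin q) (Fin q) ℝ) (w : ℝ → Fin q → ℝ)
    (hw : ∀ t ∈ Set.Ici (0 : ℝ), HasDerivAt w (Sw.mulVec (w t)) t)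
    (hwBdd : ∃ Mw : ℝ, ∀ t ∈ Set.Ici (0 : ℝ), ‖w t‖ ≤ Mw)
    (x xss : ℝ → Fin n → ℝ) (η ηss : ℝ → Fin q → ℝ)
    (hx : ∀ t ∈ Set.Ici (0 : ℝ), HasDerivAt x
      (A.mulVec (Zvec Q (x t)) +
        B.mulVec (K.mulVec (Zvec Q (x t)) + Ξᵀ.mulVec (η t) -
          Khat.mulVec (C.mulVec (Zvec Q (x t)) + F.mulVec (w t))) +
        E.mulVec (w t)) t)
    (hη : ∀ t ∈ Set.Ici (0 : ℝ), HasDerivAt η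
      (S.mulVec (η t) -
        α • Ξ.mulVec (C.mulVec (Zvec Q (x t)) + F.mulVec (w t))) t)
    (hxss : ∀ t ∈ Set.Ici (0 : ℝ), HasDerivAt xss
      (A.mulVec (Zvec Q (xss t)) +
        B.mulVec (K.mulVec (Zvec Q (xss t)) + Ξᵀ.mulVec (ηss t)) +
        E.mulVec (w t)) t)
    (hηss : ∀ t ∈ Set.Ici (0 : ℝ), HasDerivAt ηss (S.mulVec (ηss t)) t)
    (hess : ∀ t ∈ Set.Ici (0 : ℝ), C.mulVec (Zvec Q (xss t)) + F.mulVec (w t) = 0)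
    (hssBdd : ∃ Ms : ℝ, ∀ t ∈ Set.Ici (0 : ℝ), ‖xss t‖ ≤ Ms ∧ ‖ηss t‖ ≤ Ms) :
    (∃ Mb : ℝ, ∀ t ∈ Set.Ici (0 : ℝ), ‖x t‖ ≤ Mb ∧ ‖η t‖ ≤ Mb) ∧
    Tendsto (fun t => C.mulVec (Zvec Q (x t)) + F.mulVec (w t)) atTop (nhds 0) := by
  obtain ⟨Mw₀, hMw₀⟩ := hwBdd
  obtain ⟨Ms₀, hMs₀⟩ := hssBdd
  set Mw : ℝ := max Mw₀ 0 with hMwdef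
  set Ms : ℝ := max Ms₀ 0 with hMsdef
  have hMw : ∀ t ∈ Set.Ici (0:ℝ), ‖w t‖ ≤ Mw := fun t ht => (hMw₀ t ht).trans (le_max_left _ _)
  have hMs : ∀ t ∈ Set.Ici (0:ℝ), ‖xss t‖ ≤ Ms ∧ ‖ηss t‖ ≤ Ms := fun t ht =>
    ⟨(hMs₀ t ht).1.trans (le_max_left _ _), (hMs₀ t ht).2.trans (le_max_left _ _)⟩
  have hMw0 : 0 ≤ Mw := le_max_right _ _
  have hMs0 : 0 ≤ Ms := le_max_right _ _
  clear_value Mw Ms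
  -- abbreviations
  set e : ℝ → Fin m → ℝ := fun t => C.mulVec (Zvec Q (x t)) + F.mulVec (w t) with hedef
  set ex : ℝ → Fin n → ℝ := fun t => x t - xss t with hexdef
  set eη : ℝ → Fin q → ℝ := fun t => η t - ηss t with heηdef
  set Δ : ℝ → (Fin n ⊕ Fin (nZ - n)) → ℝ := fun t => Zvec Q (x t) - Zvec Q (xss t) with hΔdef
  set dx : ℝ → Fin n → ℝ := fun t => (A + B * K).mulVec (Δ t) + B.mulVec (Ξᵀ.mulVec (eη t)) -
    B.mulVec (Khat.mulVec (e t)) with hdxdef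
  set dη : ℝ → Fin q → ℝ := fun t => S.mulVec (eη t) - α • Ξ.mulVec (e t) with hdηdef
  clear_value e ex eη Δ dx dη
  have hPsym : Pᵀ = P := by
    have := hP.1
    rwa [Matrix.IsHermitian, conjTranspose_eq_transpose_of_trivial] at this
  -- error via Δ
  have heΔ : ∀ t ∈ Set.Ici (0:ℝ), C.mulVec (Δ t) = e t := by
    intro t ht
    have h0 := hess t ht
    have h1 : C.mulVec (Zvec Q (xss t)) = -(F.mulVec (w t)) := eq_neg_of_add_eq_zero_left h0
    simp only [hΔdef, Matrix.mulVec_sub, h1, hedef]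
    abel
  have hexI : ∀ t, ex t = (calI n (nZ - n)).mulVec (Δ t) := by
    intro t
    simp only [hΔdef, Matrix.mulVec_sub, calI_Zvec, hexdef]
  -- derivatives of the error variables
  have hexd : ∀ t ∈ Set.Ici (0:ℝ), HasDerivAt ex (dx t) t := by
    intro t ht
    have h := (hx t ht).sub (hxss t ht)
    rw [hexdef]
    refine h.congr_deriv ?_
    simp only [hdxdef, hΔdef, hedef, heηdef, Matrix.mulVec_sub, Matrix.mulVec_add,
      Matrix.add_mulVec, ← Matrix.mulVec_mulVec]
    abel
  have hηd : ∀ t ∈ Set.Ici (0:ℝ), HasDerivAt eη (dη t) t := by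
    intro t ht
    have h := (hη t ht).sub (hηss t ht)
    rw [heηdef]
    refine h.congr_deriv ?_
    simp only [hdηdef, heηdef, hedef, Matrix.mulVec_sub]
    abel
  -- storage function
  set V : ℝ → ℝ := fun t => (1/2) * (ex t ⬝ᵥ P.mulVec (ex t)) +
    (1/(2*α)) * (eη t ⬝ᵥ eη t) with hVdef
  set DV : ℝ → ℝ := fun t => (1/2) * ((dx t ⬝ᵥ P.mulVec (ex t)) +
      (ex t ⬝ᵥ P.mulVec (dx t))) +
    (1/(2*α)) * ((dη t ⬝ᵥ eη t) + (eη t ⬝ᵥ dη t)) with hDVdef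
  set g : ℝ → ℝ := fun t => e t ⬝ᵥ Khat.mulVec (e t) with hgdef
  clear_value V DV g
  have hVd : ∀ t ∈ Set.Ici (0:ℝ), HasDerivAt V (DV t) t := by
    intro t ht
    have h1 := hasDerivAt_dot (hexd t ht) (hasDerivAt_mulVec P (hexd t ht))
    have h2 := hasDerivAt_dot (hηd t ht) (hηd t ht)
    rw [hVdef, hDVdef]
    exact (h1.const_mul (1/2)).add (h2.const_mul (1/(2*α)))
  have hDVle : ∀ t ∈ Set.Ici (0:ℝ), DV t ≤ -(g t) := by
    intro t ht
    have := DV_le n (nZ - n) m q A B C K P hPsym hLMI hPB S hS Ξ α hα Khat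
      (Δ t) (eη t) (e t) (heΔ t ht)
    rw [← hexI t] at this
    simp only [hDVdef, hgdef, hdxdef, hdηdef]
    exact this
  -- nonnegativity
  have hgnn : ∀ t, 0 ≤ g t := by
    intro t
    have := hKhat.posSemidef.dotProduct_mulVec_nonneg (e t)
    simpa [hgdef] using this
  have hVnn : ∀ t, 0 ≤ V t := by
    intro t
    have h1 := hP.posSemidef.dotProduct_mulVec_nonneg (ex t)
    simp only [star_trivial] at h1
    have h2 := dot_self_nonneg' (eη t)
    have h3 : (0:ℝ) < 1/(2*α) := by positivity
    simp only [hVdef]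
    have := mul_nonneg h3.le h2
    nlinarith
  -- continuity at points of [0, ∞)
  have hxc : ∀ t ∈ Set.Ici (0:ℝ), ContinuousAt x t := fun t ht => (hx t ht).continuousAt
  have hwc : ∀ t ∈ Set.Ici (0:ℝ), ContinuousAt w t := fun t ht => (hw t ht).continuousAt
  have hec : ∀ t ∈ Set.Ici (0:ℝ), ContinuousAt e t := by
    intro t ht
    have hC : Continuous (fun v : (Fin n ⊕ Fin (nZ - n)) → ℝ => C.mulVec v) := (mvL C).continuous
    have hF : Continuous (fun v : Fin q → ℝ => F.mulVec v) := (mvL F).continuous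
    have h1 : ContinuousAt (fun s => C.mulVec (Zvec Q (x s))) t :=
      (hC.comp (continuous_Zvec hQ.continuous)).continuousAt.comp (hxc t ht)
    have h2 : ContinuousAt (fun s => F.mulVec (w s)) t :=
      hF.continuousAt.comp (hwc t ht)
    rw [hedef]
    exact h1.add h2
  have hgc : ∀ t ∈ Set.Ici (0:ℝ), ContinuousAt g t := by
    intro t ht
    rw [hgdef]
    exact ((continuous_quadform Khat).continuousAt).comp (hec t ht)
  -- interval integrability of g within [0, ∞)
  have hgInt : ∀ a b : ℝ, 0 ≤ a → a ≤ b → IntervalIntegrable g MeasureTheory.volume a b := by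
    intro a b ha hab
    apply ContinuousOn.intervalIntegrable
    intro s hs
    rw [Set.uIcc_of_le hab] at hs
    exact (hgc s (le_trans ha hs.1)).continuousWithinAt
  set FI : ℝ → ℝ := fun t => ∫ s in (0:ℝ)..t, g s with hFIdef
  clear_value FI
  have hFTC : ∀ t ∈ Set.Ioi (0:ℝ), HasDerivAt FI (g t) t := by
    intro t ht
    rw [hFIdef]
    refine intervalIntegral.integral_hasDerivAt_right (hgInt 0 t le_rfl (le_of_lt ht)) ?_
      (hgc t (Set.mem_Ici.mpr (le_of_lt (Set.mem_Ioi.mp ht))))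
    exact ContinuousAt.stronglyMeasurableAtFilter isOpen_Ioi
      (fun s hs => hgc s (le_of_lt hs)) t ht
  set W : ℝ → ℝ := fun t => V t + FI t with hWdef
  have hWcont : ContinuousOn W (Set.Ici 0) := by
    intro t ht
    refine ContinuousWithinAt.add ((hVd t ht).continuousAt).continuousWithinAt ?_
    have htt : (0:ℝ) ≤ t := ht
    have hint : MeasureTheory.IntegrableOn g (Set.uIcc 0 (t+1)) MeasureTheory.volume := by
      have h1 : IntervalIntegrable g MeasureTheory.volume 0 (t+1) :=
        hgInt 0 (t+1) le_rfl (by linarith)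
      rwa [intervalIntegrable_iff_integrableOn_Icc_of_le (by linarith : (0:ℝ) ≤ t+1),
        ← Set.uIcc_of_le (by linarith : (0:ℝ) ≤ t+1)] at h1
    have hIcc : ContinuousOn FI (Set.Icc 0 (t+1)) := by
      rw [hFIdef]
      have h2 := intervalIntegral.continuousOn_primitive_interval hint
      rwa [Set.uIcc_of_le (by linarith : (0:ℝ) ≤ t+1)] at h2
    have hmem : Set.Icc (0:ℝ) (t+1) ∈ nhdsWithin t (Set.Ici 0) := by
      rw [← Set.Ici_inter_Iic]
      exact Filter.inter_mem self_mem_nhdsWithin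
        (mem_nhdsWithin_of_mem_nhds (Iic_mem_nhds (by linarith)))
    exact (hIcc t ⟨htt, by linarith⟩).mono_of_mem_nhdsWithin hmem
  have hWanti : AntitoneOn W (Set.Ici 0) := by
    apply antitoneOn_of_deriv_nonpos (convex_Ici 0) hWcont
    · intro t ht
      rw [interior_Ici] at ht
      exact ((hVd t (Set.mem_Ici.mpr (le_of_lt (Set.mem_Ioi.mp ht)))).add (hFTC t ht)).differentiableAt.differentiableWithinAt
    · intro t ht
      rw [interior_Ici] at ht
      have hD : HasDerivAt W (DV t + g t) t := (hVd t (Set.mem_Ici.mpr (le_of_lt (Set.mem_Ioi.mp ht)))).add (hFTC t ht)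
      rw [hD.deriv]
      have := hDVle t (Set.mem_Ici.mpr (le_of_lt (Set.mem_Ioi.mp ht)))
      linarith
  have hFI0 : FI 0 = 0 := by rw [hFIdef]; exact intervalIntegral.integral_same
  have hWle : ∀ t ∈ Set.Ici (0:ℝ), V t + FI t ≤ V 0 := by
    intro t ht
    have := hWanti (Set.self_mem_Ici) ht ht
    simp only [hWdef, hFI0, add_zero] at this
    exact this
  set V₀ : ℝ := V 0 with hV₀def
  clear_value V₀
  have hV₀nn : 0 ≤ V₀ := hV₀def ▸ hVnn 0
  have hFInn : ∀ t ∈ Set.Ici (0:ℝ), 0 ≤ FI t := fun t ht => by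
    rw [hFIdef]; exact intervalIntegral.integral_nonneg ht (fun u _ => hgnn u)
  have hVle : ∀ t ∈ Set.Ici (0:ℝ), V t ≤ V₀ := fun t ht => by
    linarith [hWle t ht, hFInn t ht]
  have hFIle : ∀ t ∈ Set.Ici (0:ℝ), FI t ≤ V₀ := fun t ht => by
    linarith [hWle t ht, hVnn t]
  obtain ⟨cP, hcP, hcPle⟩ := posdef_coercive hP
  obtain ⟨cK, hcK, hcKle⟩ := posdef_coercive hKhat
  set R1 : ℝ := Real.sqrt (2*V₀/cP) with hR1def
  set R2 : ℝ := Real.sqrt (2*α*V₀) with hR2def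
  clear_value R1 R2
  have hR1nn : 0 ≤ R1 := hR1def ▸ Real.sqrt_nonneg _
  have hR2nn : 0 ≤ R2 := hR2def ▸ Real.sqrt_nonneg _
  have hexB : ∀ t ∈ Set.Ici (0:ℝ), ‖ex t‖ ≤ R1 := by
    intro t ht
    have hVt := hVle t ht
    simp only [hVdef] at hVt
    have hterm : 0 ≤ (1/(2*α)) * (eη t ⬝ᵥ eη t) :=
      mul_nonneg (by positivity) (dot_self_nonneg' _)
    have h2 : ex t ⬝ᵥ P.mulVec (ex t) ≤ 2*V₀ := by linarith only [hVt, hterm]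
    have h3 : ex t ⬝ᵥ ex t ≤ 2*V₀/cP := by
      rw [le_div_iff₀ hcP]
      have h5 := hcPle (ex t)
      nlinarith [h5, h2]
    have h4 : ‖ex t‖^2 ≤ 2*V₀/cP := le_trans (norm_sq_le_dot _) h3
    rw [hR1def]
    rw [show (2*V₀/cP) = Real.sqrt (2*V₀/cP)^2 from
      (Real.sq_sqrt (div_nonneg (by linarith) hcP.le)).symm] at h4
    nlinarith [Real.sqrt_nonneg (2*V₀/cP), norm_nonneg (ex t), h4]
  have heηB : ∀ t ∈ Set.Ici (0:ℝ), ‖eη t‖ ≤ R2 := by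
    intro t ht
    have hVt := hVle t ht
    simp only [hVdef] at hVt
    have h1 := hP.posSemidef.dotProduct_mulVec_nonneg (ex t)
    simp only [star_trivial] at h1
    have h2 : (1/(2*α)) * (eη t ⬝ᵥ eη t) ≤ V₀ := by nlinarith [hVt, h1]
    have h3 : eη t ⬝ᵥ eη t ≤ 2*α*V₀ := by
      have hXeq : eη t ⬝ᵥ eη t = (2*α) * ((1/(2*α)) * (eη t ⬝ᵥ eη t)) := by
        field_simp
      rw [hXeq]
      calc (2*α) * ((1/(2*α)) * (eη t ⬝ᵥ eη t)) ≤ (2*α) * V₀ :=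
            mul_le_mul_of_nonneg_left h2 (by linarith)
        _ = 2*α*V₀ := by ring
    have h4 : ‖eη t‖^2 ≤ 2*α*V₀ := le_trans (norm_sq_le_dot _) h3
    rw [hR2def]
    rw [show (2*α*V₀) = Real.sqrt (2*α*V₀)^2 from
      (Real.sq_sqrt (by nlinarith [hV₀nn, hα])).symm] at h4
    nlinarith [Real.sqrt_nonneg (2*α*V₀), norm_nonneg (eη t), h4]
  -- bounds on x and η
  have hxB : ∀ t ∈ Set.Ici (0:ℝ), ‖x t‖ ≤ Ms + R1 := by
    intro t ht
    have : x t = ex t + xss t := by simp [hexdef]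
    rw [this]
    calc ‖ex t + xss t‖ ≤ ‖ex t‖ + ‖xss t‖ := norm_add_le _ _
      _ ≤ R1 + Ms := add_le_add (hexB t ht) (hMs t ht).1
      _ = Ms + R1 := by ring
  have hηB : ∀ t ∈ Set.Ici (0:ℝ), ‖η t‖ ≤ Ms + R2 := by
    intro t ht
    have : η t = eη t + ηss t := by simp [heηdef]
    rw [this]
    calc ‖eη t + ηss t‖ ≤ ‖eη t‖ + ‖ηss t‖ := norm_add_le _ _
      _ ≤ R2 + Ms := add_le_add (heηB t ht) (hMs t ht).2
      _ = Ms + R2 := by ring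
  constructor
  · exact ⟨Ms + max R1 R2, fun t ht =>
      ⟨(hxB t ht).trans (add_le_add (le_refl Ms) (le_max_left _ _)),
       (hηB t ht).trans (add_le_add (le_refl Ms) (le_max_right _ _))⟩⟩
  -- Lipschitz bound for e on [0, ∞)
  set Mx : ℝ := Ms + R1 with hMxdef
  set Mη : ℝ := Ms + R2 with hMηdef
  clear_value Mx Mη
  have hMx0 : 0 ≤ Mx := hMxdef ▸ add_nonneg hMs0 hR1nn
  have hMη0 : 0 ≤ Mη := hMηdef ▸ add_nonneg hMs0 hR2nn
  obtain ⟨MQ, hMQ⟩ := (isCompact_closedBall (0 : Fin n → ℝ) Mx).exists_bound_of_continuousOn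
    hQ.continuous.continuousOn
  have hMQ0 : 0 ≤ MQ := le_trans (norm_nonneg (Q 0)) (hMQ 0 (by simp [hMx0]))
  obtain ⟨MdQ, hMdQ⟩ := (isCompact_closedBall (0 : Fin n → ℝ) Mx).exists_bound_of_continuousOn
    (hQ.continuous_fderiv one_ne_zero).continuousOn
  have hMdQ0 : 0 ≤ MdQ := le_trans (norm_nonneg _) (hMdQ 0 (by simp [hMx0]))
  have hxball : ∀ t ∈ Set.Ici (0:ℝ), x t ∈ Metric.closedBall (0 : Fin n → ℝ) Mx := by
    intro t ht
    rw [Metric.mem_closedBall, dist_zero_right]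
    exact hxB t ht
  set MZ : ℝ := max Mx MQ with hMZdef
  clear_value MZ
  have hMZ0 : 0 ≤ MZ := hMZdef ▸ le_trans hMx0 (le_max_left _ _)
  have hZB : ∀ t ∈ Set.Ici (0:ℝ), ‖Zvec Q (x t)‖ ≤ MZ := by
    intro t ht
    refine (norm_sum_elim_le _ _).trans ?_
    rw [hMZdef]
    exact max_le_max (hxB t ht) (hMQ _ (hxball t ht))
  set Me : ℝ := ‖mvL C‖ * MZ + ‖mvL F‖ * Mw with hMedef
  clear_value Me
  have heB : ∀ t ∈ Set.Ici (0:ℝ), ‖e t‖ ≤ Me := by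
    intro t ht
    rw [hedef, hMedef]
    refine (norm_add_le _ _).trans ?_
    refine add_le_add ((norm_mulVec_le C _).trans ?_) ((norm_mulVec_le F _).trans ?_)
    · exact mul_le_mul_of_nonneg_left (hZB t ht) (norm_nonneg _)
    · exact mul_le_mul_of_nonneg_left (hMw t ht) (norm_nonneg _)
  set X' : ℝ → Fin n → ℝ := fun t => A.mulVec (Zvec Q (x t)) +
    B.mulVec (K.mulVec (Zvec Q (x t)) + Ξᵀ.mulVec (η t) - Khat.mulVec (e t)) +
    E.mulVec (w t) with hX'def
  set MX : ℝ := ‖mvL A‖ * MZ + ‖mvL B‖ * (‖mvL K‖ * MZ + ‖mvL Ξᵀ‖ * Mη + ‖mvL Khat‖ * Me) +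
    ‖mvL E‖ * Mw with hMXdef
  clear_value X' MX
  have hMe0 : 0 ≤ Me := le_trans (norm_nonneg _) (heB 0 Set.self_mem_Ici)
  have hMX0 : 0 ≤ MX := by
    rw [hMXdef]
    have h0 := norm_nonneg (mvL A); have h1 := norm_nonneg (mvL B)
    have h2 := norm_nonneg (mvL K); have h3 := norm_nonneg (mvL Ξᵀ)
    have h4 := norm_nonneg (mvL Khat); have h5 := norm_nonneg (mvL E)
    have h6 := norm_nonneg (mvL C); have h7 := norm_nonneg (mvL F)
    nlinarith [mul_nonneg h0 hMZ0, mul_nonneg h5 hMw0, mul_nonneg h2 hMZ0,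
      mul_nonneg h3 hMη0, mul_nonneg h4 hMe0,
      mul_nonneg h1 (add_nonneg (add_nonneg (mul_nonneg h2 hMZ0) (mul_nonneg h3 hMη0)) (mul_nonneg h4 hMe0))]
  have hX'B : ∀ t ∈ Set.Ici (0:ℝ), ‖X' t‖ ≤ MX := by
    intro t ht
    rw [hX'def, hMXdef]
    refine (norm_add_le _ _).trans ?_
    refine add_le_add ((norm_add_le _ _).trans (add_le_add
      ((norm_mulVec_le A _).trans ?_) ((norm_mulVec_le B _).trans ?_)))
      ((norm_mulVec_le E _).trans ?_)
    · exact mul_le_mul_of_nonneg_left (hZB t ht) (norm_nonneg _)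
    · refine mul_le_mul_of_nonneg_left ?_ (norm_nonneg _)
      refine (norm_sub_le _ _).trans ?_
      refine add_le_add ((norm_add_le _ _).trans (add_le_add
        ((norm_mulVec_le K _).trans ?_) ((norm_mulVec_le Ξᵀ _).trans ?_)))
        ((norm_mulVec_le Khat _).trans ?_)
      · exact mul_le_mul_of_nonneg_left (hZB t ht) (norm_nonneg _)
      · exact mul_le_mul_of_nonneg_left (hηB t ht) (norm_nonneg _)
      · exact mul_le_mul_of_nonneg_left (heB t ht) (norm_nonneg _)
    · exact mul_le_mul_of_nonneg_left (hMw t ht) (norm_nonneg _)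
  set De : ℝ → Fin m → ℝ := fun t => C.mulVec (Sum.elim (X' t) (fderiv ℝ Q (x t) (X' t))) +
    F.mulVec (Sw.mulVec (w t)) with hDedef
  clear_value De
  have heD : ∀ t ∈ Set.Ici (0:ℝ), HasDerivAt e (De t) t := by
    intro t ht
    have hx' : HasDerivAt x (X' t) t := by
      rw [hX'def, hedef]
      exact hx t ht
    have h1 : HasDerivAt (fun s => C.mulVec (Zvec Q (x s)))
        (C.mulVec (Sum.elim (X' t) (fderiv ℝ Q (x t) (X' t)))) t :=
      hasDerivAt_mulVec C (hasDerivAt_Zvec hQ hx')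
    have h2 : HasDerivAt (fun s => F.mulVec (w s)) (F.mulVec (Sw.mulVec (w t))) t :=
      hasDerivAt_mulVec F (hw t ht)
    rw [hedef, hDedef]
    exact h1.add h2
  set Le0 : ℝ := ‖mvL C‖ * max MX (MdQ * MX) + ‖mvL F‖ * (‖mvL Sw‖ * Mw) with hLe0def
  clear_value Le0
  have hDeB : ∀ t ∈ Set.Ici (0:ℝ), ‖De t‖ ≤ Le0 := by
    intro t ht
    rw [hDedef, hLe0def]
    refine (norm_add_le _ _).trans (add_le_add
      ((norm_mulVec_le C _).trans ?_) ((norm_mulVec_le F _).trans ?_))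
    · refine mul_le_mul_of_nonneg_left ?_ (norm_nonneg _)
      refine (norm_sum_elim_le _ _).trans ?_
      refine max_le_max (hX'B t ht) ?_
      calc ‖fderiv ℝ Q (x t) (X' t)‖ ≤ ‖fderiv ℝ Q (x t)‖ * ‖X' t‖ :=
            ContinuousLinearMap.le_opNorm _ _
        _ ≤ MdQ * MX := mul_le_mul (hMdQ _ (hxball t ht)) (hX'B t ht) (norm_nonneg _) hMdQ0
    · refine mul_le_mul_of_nonneg_left ?_ (norm_nonneg _)
      exact (norm_mulVec_le Sw _).trans (mul_le_mul_of_nonneg_left (hMw t ht) (norm_nonneg _))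
  set Le : ℝ := max Le0 1 with hLedef
  clear_value Le
  have hLe1 : (1:ℝ) ≤ Le := hLedef ▸ le_max_right _ _
  have hLepos : (0:ℝ) < Le := lt_of_lt_of_le one_pos hLe1
  have hLip : ∀ s ∈ Set.Ici (0:ℝ), ∀ t ∈ Set.Ici (0:ℝ), ‖e t - e s‖ ≤ Le * ‖t - s‖ := by
    intro s hs t ht
    exact Convex.norm_image_sub_le_of_norm_hasDerivWithin_le
      (fun u hu => (heD u hu).hasDerivWithinAt)
      (fun u hu => (hDeB u hu).trans (hLedef ▸ le_max_left _ _)) (convex_Ici 0) hs ht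
  -- Barbalat-type argument
  rw [Metric.tendsto_atTop]
  intro ε hε
  set hstep : ℝ := ε / (2 * Le) with hhdef
  clear_value hstep
  have hsteppos : 0 < hstep := hhdef ▸ div_pos hε (by linarith)
  set c0 : ℝ := cK * (ε/2)^2 with hc0def
  clear_value c0
  have hc0pos : 0 < c0 := hc0def ▸ mul_pos hcK (by positivity)
  set δ : ℝ := c0 * hstep with hδdef
  clear_value δ
  have hδpos : 0 < δ := hδdef ▸ mul_pos hc0pos hsteppos
  have hbddA : BddAbove (FI '' Set.Ici 0) := by
    refine ⟨V₀, ?_⟩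
    rintro _ ⟨t, ht, rfl⟩
    exact hFIle t ht
  have hneA : (FI '' Set.Ici 0).Nonempty := ⟨FI 0, 0, Set.self_mem_Ici, rfl⟩
  set L : ℝ := sSup (FI '' Set.Ici 0) with hLdef
  clear_value L
  obtain ⟨y, ⟨t₀, ht₀, rfl⟩, hLt₀⟩ := exists_lt_of_lt_csSup hneA
    (show L - δ < sSup (FI '' Set.Ici 0) by rw [← hLdef]; exact sub_lt_self L hδpos)
  refine ⟨t₀, fun t htt => ?_⟩
  have ht0 : (0:ℝ) ≤ t := le_trans ht₀ htt
  rw [dist_zero_right]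
  by_contra hcon
  push_neg at hcon
  have hLeh : Le * hstep = ε/2 := by
    rw [hhdef]
    have hLne : Le ≠ 0 := ne_of_gt hLepos
    field_simp
  have hlow : ∀ s ∈ Set.Icc t (t + hstep), c0 ≤ g s := by
    intro s hs
    have hs0 : (0:ℝ) ≤ s := le_trans ht0 hs.1
    have h1 : ‖e t - e s‖ ≤ ε/2 := by
      have := hLip s hs0 t ht0
      have habs : ‖t - s‖ ≤ hstep := by
        rw [Real.norm_eq_abs, abs_le]
        constructor <;> linarith [hs.1, hs.2, hsteppos.le]
      calc ‖e t - e s‖ ≤ Le * ‖t - s‖ := this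
        _ ≤ Le * hstep := mul_le_mul_of_nonneg_left habs hLepos.le
        _ = ε/2 := hLeh
    have h2 : ε/2 ≤ ‖e s‖ := by
      have h3 : ‖e t‖ ≤ ‖e s‖ + ‖e t - e s‖ := by
        calc ‖e t‖ = ‖e s + (e t - e s)‖ := by ring_nf
          _ ≤ ‖e s‖ + ‖e t - e s‖ := norm_add_le _ _
      linarith [hcon]
    have h4 : (ε/2)^2 ≤ ‖e s‖^2 := pow_le_pow_left₀ (by positivity) h2 2
    calc c0 = cK * (ε/2)^2 := hc0def
      _ ≤ cK * ‖e s‖^2 := mul_le_mul_of_nonneg_left h4 hcK.le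
      _ ≤ cK * (e s ⬝ᵥ e s) := mul_le_mul_of_nonneg_left (norm_sq_le_dot _) hcK.le
      _ ≤ e s ⬝ᵥ Khat.mulVec (e s) := hcKle _
      _ = g s := by rw [hgdef]
  have hIlow : c0 * hstep ≤ ∫ s in t..(t + hstep), g s := by
    have hmono := intervalIntegral.integral_mono_on (μ := MeasureTheory.volume)
      (f := fun _ => c0) (g := g) (by linarith : t ≤ t + hstep)
      (intervalIntegrable_const) (hgInt t (t+hstep) ht0 (by linarith)) hlow
    have hconst : (∫ _ in t..(t+hstep), c0) = hstep * c0 := by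
      rw [intervalIntegral.integral_const, smul_eq_mul]
      ring_nf
    rw [hconst] at hmono
    linarith [hmono]
  have hadd : FI t + ∫ s in t..(t+hstep), g s = FI (t + hstep) := by
    rw [hFIdef]
    exact intervalIntegral.integral_add_adjacent_intervals (hgInt 0 t le_rfl ht0)
      (hgInt t (t+hstep) ht0 (by linarith))
  have hmono2 : FI t₀ ≤ FI t := by
    have hadd2 : FI t₀ + ∫ s in t₀..t, g s = FI t := by
      rw [hFIdef]
      exact intervalIntegral.integral_add_adjacent_intervals (hgInt 0 t₀ le_rfl ht₀)
        (hgInt t₀ t ht₀ htt)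
    have hnn2 : 0 ≤ ∫ s in t₀..t, g s :=
      intervalIntegral.integral_nonneg htt (fun u _ => hgnn u)
    linarith
  have hle2 : FI (t + hstep) ≤ L := by
    rw [hLdef]
    exact le_csSup hbddA ⟨t + hstep, by simp only [Set.mem_Ici]; linarith, rfl⟩
  have hLt₀' : L - δ < FI t₀ := by rw [hLdef]; rw [hLdef, hδdef] at hLt₀; linarith [hLt₀]
  rw [hδdef] at hLt₀'
  linarith [hIlow, hadd, hmono2, hle2, hLt₀']
end
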